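/- Let P be a right LCM monoid, and p, q, r ∈ P with r = qk. Then [r,r] is weakly fixed by [p,q] (i.e., [p,q] f [q,p] f ≠ 0 for every nonzero idempotent f ≤ [r,r]) if and only if for all a ∈ P, qkaP ∩ pkaP ≠ ∅. -/

import Mathlib

/-- The principal right ideal `pP` of a monoid. -/
def rI {M : Type*} [Monoid M] (p : M) : Set M := {x | ∃ y, x = p * y}

/-- A right LCM monoid: left cancellative, and any two principal right ideals are
either disjoint or intersect in another principal right ideal. -/
class RightLCM (M : Type*) extends Monoid M where
  mul_left_cancel' : ∀ a b c : M, a * b = a * c → b = c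
  lcm : ∀ p q : M, rI p ∩ rI q = ∅ ∨ ∃ r : M, rI p ∩ rI q = rI r

namespace RightLCM

variable {M : Type*} [RightLCM M]

/-- The equivalence relation `(p,q) ∼ (pu,qu)` for units `u`. -/
def peq (x y : M × M) : Prop := ∃ u : M, IsUnit u ∧ x.1 = y.1 * u ∧ x.2 = y.2 * u

theorem peq_equivalence : Equivalence (peq (M := M)) := by
  constructor
  · intro x; exact ⟨1, isUnit_one, by simp, by simp⟩
  · rintro x y ⟨u, hu, h1, h2⟩
    obtain ⟨w, hw⟩ := hu
    subst hw
    exact ⟨↑w⁻¹, Units.isUnit _, by rw [h1, mul_assoc, w.mul_inv, mul_one],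
      by rw [h2, mul_assoc, w.mul_inv, mul_one]⟩
  · rintro x y z ⟨u, hu, h1, h2⟩ ⟨v, hv, h3, h4⟩
    exact ⟨v * u, hv.mul hu, by rw [h1, h3, mul_assoc], by rw [h2, h4, mul_assoc]⟩

instance pSetoid : Setoid (M × M) := ⟨peq, peq_equivalence⟩

/-- The inverse semigroup `S = {[p,q] : p,q ∈ P} ∪ {0}` associated to a right LCM monoid. -/
abbrev S (M : Type*) [RightLCM M] := WithZero (Quotient (pSetoid (M := M)))

/-- The class `[p,q]` as an element of `S M`. -/
def cls (p q : M) : S M := (Quotient.mk (pSetoid (M := M)) (p, q) : Quotient (pSetoid (M := M)))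

open scoped Classical in
/-- Product of two representatives: `[a,b][c,d] = [ab', dc']` when `bP ∩ cP = rP` with
`bb' = cc' = r`, and `0` when `bP ∩ cP = ∅`. -/
noncomputable def mulPair (x y : M × M) : S M :=
  if h : rI x.2 ∩ rI y.1 = ∅ then 0
  else
    have hr := (RightLCM.lcm x.2 y.1).resolve_left h
    have hmem : Classical.choose hr ∈ rI x.2 ∩ rI y.1 :=
      (Set.ext_iff.mp (Classical.choose_spec hr) _).mpr ⟨1, (mul_one _).symm⟩
    cls (x.1 * Classical.choose hmem.1) (y.2 * Classical.choose hmem.2)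

/-- The multiplication on `S M` (with `0` absorbing). -/
noncomputable def smul : S M → S M → S M
  | none, _ => 0
  | some _, none => 0
  | some a, some b => mulPair a.out b.out

/-- The involution `[p,q]* = [q,p]` on `S M`. -/
noncomputable def star : S M → S M
  | none => 0
  | some a => cls a.out.2 a.out.1

end RightLCM

/-!
Every nonzero idempotent of `S` has the form `[x,x]`, and it lies below `[r,r]` exactly when
`x = ra`. Conjugating `[qka,qka]` by `[p,q]` gives `[pka,pka]`, and the product
`[pka,pka][qka,qka]` vanishes exactly when `pkaP ∩ qkaP = ∅`.
-/

section LeftCancel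

variable {M : Type*} [Monoid M]

theorem mem_rI {p x : M} : x ∈ rI p ↔ p ∣ x := Iff.rfl

theorem rI_nonempty (p : M) : (rI p).Nonempty := ⟨p, dvd_refl p⟩

theorem rI_mul_of_isUnit {u : M} (hu : IsUnit u) (p : M) : rI (p * u) = rI p :=
  Set.ext fun _ => hu.mul_right_dvd

theorem rI_inter_rI_mul (p c : M) : rI p ∩ rI (p * c) = rI (p * c) :=
  Set.inter_eq_right.mpr fun _ hx => (dvd_mul_right p c).trans hx

theorem exists_isUnit_of_rI_eq [IsLeftCancelMul M] {a b : M} (h : rI a = rI b) :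
    ∃ u, IsUnit u ∧ a = b * u := by
  obtain ⟨s, hs⟩ : b ∣ a := mem_rI.mp (h ▸ dvd_refl a)
  obtain ⟨t, ht⟩ : a ∣ b := mem_rI.mp (h.symm ▸ dvd_refl b)
  have hst : s * t = 1 := mul_left_cancel (a := b) (by rw [← mul_assoc, ← hs, ← ht, mul_one])
  exact ⟨s, .of_mul_eq_one t hst, hs⟩

end LeftCancel

namespace RightLCM

variable {M : Type*} [RightLCM M]

instance : IsLeftCancelMul M := ⟨mul_left_cancel'⟩

theorem exists_lcm {b c : M} (h : rI b ∩ rI c ≠ ∅) :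
    ∃ m s t : M, rI b ∩ rI c = rI m ∧ m = b * s ∧ m = c * t := by
  obtain ⟨m, hm⟩ := (lcm b c).resolve_left h
  obtain ⟨⟨s, hs⟩, ⟨t, ht⟩⟩ : m ∈ rI b ∩ rI c := hm ▸ dvd_refl m
  exact ⟨m, s, t, hm, hs, ht⟩

theorem cls_ne_zero (a b : M) : cls a b ≠ 0 := WithZero.coe_ne_zero

theorem cls_eq_iff {a b c d : M} :
    cls a b = cls c d ↔ ∃ u : M, IsUnit u ∧ a = c * u ∧ b = d * u :=
  WithZero.coe_inj.trans Quotient.eq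

theorem exists_eq_cls {f : S M} (hf : f ≠ 0) : ∃ x y : M, f = cls x y := by
  obtain ⟨c, rfl⟩ := WithZero.ne_zero_iff_exists.mp hf
  exact ⟨c.out.1, c.out.2, congrArg _ c.out_eq.symm⟩

theorem inter_rI_eq_of_peq {x y : M × M} {a b c d : M} (hx : peq x (a, b)) (hy : peq y (c, d)) :
    rI x.2 ∩ rI y.1 = rI b ∩ rI c := by
  obtain ⟨u, hu, -, hx2⟩ := hx
  obtain ⟨v, hv, hy1, -⟩ := hy
  rw [hx2, hy1, rI_mul_of_isUnit hu, rI_mul_of_isUnit hv]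

theorem cls_mul_eq_of_peq {x y : M × M} {a b c d m s t m' s' t' : M}
    (hx : peq x (a, b)) (hy : peq y (c, d))
    (hm : rI b ∩ rI c = rI m) (hs : m = b * s) (ht : m = c * t)
    (hm' : rI x.2 ∩ rI y.1 = rI m') (hs' : m' = x.2 * s') (ht' : m' = y.1 * t') :
    cls (x.1 * s') (y.2 * t') = cls (a * s) (d * t) := by
  obtain ⟨w, hw, rfl⟩ := exists_isUnit_of_rI_eq (hm' ▸ hm ▸ inter_rI_eq_of_peq hx hy)
  obtain ⟨u, -, hx1, hx2⟩ := hx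
  obtain ⟨v, -, hy1, hy2⟩ := hy
  have hu : u * s' = s * w := mul_left_cancel (a := b) <| by
    rw [← mul_assoc, ← hx2, ← hs', hs, mul_assoc]
  have hv : v * t' = t * w := mul_left_cancel (a := c) <| by
    rw [← mul_assoc, ← hy1, ← ht', ht, mul_assoc]
  exact cls_eq_iff.mpr ⟨w, hw, by rw [hx1, mul_assoc, hu, mul_assoc],
    by rw [hy2, mul_assoc, hv, mul_assoc]⟩

theorem mulPair_eq_of_peq {x y : M × M} {a b c d m s t : M}
    (hx : peq x (a, b)) (hy : peq y (c, d))
    (hm : rI b ∩ rI c = rI m) (hs : m = b * s) (ht : m = c * t) :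
    mulPair x y = cls (a * s) (d * t) := by
  have hne : rI x.2 ∩ rI y.1 ≠ ∅ :=
    (inter_rI_eq_of_peq hx hy).trans hm ▸ (rI_nonempty m).ne_empty
  rw [mulPair, dif_neg hne]
  dsimp only
  generalize_proofs hr hs' ht'
  exact cls_mul_eq_of_peq hx hy hm hs ht (Classical.choose_spec hr) (Classical.choose_spec hs')
    (Classical.choose_spec ht')

theorem mulPair_eq_zero_of_peq {x y : M × M} {a b c d : M}
    (hx : peq x (a, b)) (hy : peq y (c, d)) (h : rI b ∩ rI c = ∅) : mulPair x y = 0 := by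
  rw [mulPair, dif_pos ((inter_rI_eq_of_peq hx hy).trans h)]

theorem smul_cls_of_lcm {a b c d m s t : M}
    (hm : rI b ∩ rI c = rI m) (hs : m = b * s) (ht : m = c * t) :
    smul (cls a b) (cls c d) = cls (a * s) (d * t) :=
  mulPair_eq_of_peq (Quotient.mk_out (s := pSetoid) (a, b))
    (Quotient.mk_out (s := pSetoid) (c, d)) hm hs ht

theorem smul_cls_eq_zero_iff {a b c d : M} :
    smul (cls a b) (cls c d) = 0 ↔ rI b ∩ rI c = ∅ := by
  refine ⟨fun h => ?_, mulPair_eq_zero_of_peq (Quotient.mk_out (s := pSetoid) (a, b))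
    (Quotient.mk_out (s := pSetoid) (c, d))⟩
  by_contra hne
  obtain ⟨m, s, t, hm, hs, ht⟩ := exists_lcm hne
  exact cls_ne_zero _ _ ((smul_cls_of_lcm hm hs ht).symm.trans h)

theorem exists_smul_cls_eq {a b c d : M} (h : smul (cls a b) (cls c d) ≠ 0) :
    ∃ s t, b * s = c * t ∧ smul (cls a b) (cls c d) = cls (a * s) (d * t) := by
  obtain ⟨m, s, t, hm, rfl, ht⟩ := exists_lcm (mt smul_cls_eq_zero_iff.mpr h)
  exact ⟨s, t, ht, smul_cls_of_lcm hm rfl ht⟩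

theorem smul_cls_mul_right (a b c d : M) : smul (cls a b) (cls (b * c) d) = cls (a * c) d := by
  simpa using smul_cls_of_lcm (a := a) (d := d) (rI_inter_rI_mul b c) rfl (mul_one _).symm

theorem smul_cls_mul_left (a b c d : M) : smul (cls a (c * b)) (cls c d) = cls a (d * b) := by
  simpa using smul_cls_of_lcm (a := a) (d := d) ((Set.inter_comm _ _).trans (rI_inter_rI_mul c b))
    (mul_one _).symm rfl

theorem smul_cls_self (x : M) : smul (cls x x) (cls x x) = cls x x := by
  simpa using smul_cls_mul_right x x 1 x

theorem smul_smul_cls_mul_self (p q b : M) :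
    smul (smul (cls p q) (cls (q * b) (q * b))) (cls q p) = cls (p * b) (p * b) := by
  rw [smul_cls_mul_right, smul_cls_mul_left]

theorem eq_of_smul_cls_self {x y : M} (h : smul (cls x y) (cls x y) = cls x y) : x = y := by
  obtain ⟨s, t, hst, he⟩ := exists_smul_cls_eq (h ▸ cls_ne_zero x y)
  obtain ⟨u, hu, hs, ht⟩ := cls_eq_iff.mp (he.symm.trans h)
  rw [mul_left_cancel hs, mul_left_cancel ht] at hst
  exact (hu.mul_left_injective hst).symm

theorem dvd_of_smul_cls_self {r x : M} (h : smul (cls r r) (cls x x) = cls x x) : r ∣ x := by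
  obtain ⟨s, t, -, he⟩ := exists_smul_cls_eq (h ▸ cls_ne_zero x x)
  obtain ⟨u, hu, hs, -⟩ := cls_eq_iff.mp (he.symm.trans h)
  exact hu.dvd_mul_right.mp (hs ▸ dvd_mul_right r s)

theorem idempotent_le_cls_self_iff {r : M} {f : S M} :
    (f ≠ 0 ∧ smul f f = f ∧ smul (cls r r) f = f) ↔ ∃ a, f = cls (r * a) (r * a) := by
  constructor
  · rintro ⟨hf, hff, hrf⟩
    obtain ⟨x, y, rfl⟩ := exists_eq_cls hf
    obtain rfl := eq_of_smul_cls_self hff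
    obtain ⟨a, rfl⟩ := dvd_of_smul_cls_self hrf
    exact ⟨a, rfl⟩
  · rintro ⟨a, rfl⟩
    exact ⟨cls_ne_zero _ _, smul_cls_self _, smul_cls_mul_right r r a _⟩

end RightLCM

open RightLCM in
/-- For `r = qk`, the idempotent `[r,r]` is weakly fixed by `[p,q]`
(i.e. `[p,q]f[q,p]f ≠ 0` for every nonzero idempotent `f ≤ [r,r]`) iff
`qkaP ∩ pkaP ≠ ∅` for all `a ∈ P`. -/
theorem stmt11 {M : Type*} [RightLCM M] (p q k r : M) (hr : r = q * k) :
    (∀ f : S M, f ≠ 0 → smul f f = f → smul (cls r r) f = f →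
      smul (smul (smul (cls p q) f) (cls q p)) f ≠ 0) ↔
    (∀ a : M, rI (q * k * a) ∩ rI (p * k * a) ≠ ∅) := by
  subst hr
  have hprod (a : M) : smul (smul (smul (cls p q) (cls (q * k * a) (q * k * a))) (cls q p))
      (cls (q * k * a) (q * k * a)) ≠ 0 ↔ rI (q * k * a) ∩ rI (p * k * a) ≠ ∅ := by
    rw [mul_assoc, smul_smul_cls_mul_self, ne_eq, smul_cls_eq_zero_iff, Set.inter_comm, mul_assoc]
  constructor
  · intro h a
    obtain ⟨hf, hff, hrf⟩ := idempotent_le_cls_self_iff.mpr ⟨a, rfl⟩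
    exact (hprod a).mp (h _ hf hff hrf)
  · intro h f hf hff hrf
    obtain ⟨a, rfl⟩ := idempotent_le_cls_self_iff.mp ⟨hf, hff, hrf⟩
    exact (hprod a).mpr (h a)
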